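/- Let f : ℝ² → ℝ be defined by f(x,y) = |r log r| with r = ‖(x,y)‖ for (x,y) ≠ 0 and f(0,0) = 0, and let Y = {(x,y,f(x,y)) : (x,y) ∈ ℝ²} ⊆ ℝ³. Then the tangent cone of Y at the origin is C₀(Y) = {(0,0,t) : t ≥ 0}, which has dimension 1, whereas the tangent cone of X = ℝ² × {0} at 0 is ℝ² × {0}, of dimension 2. -/

import Mathlib

open Metric Set Filter Topology

/-- The tangent cone of `S ⊆ ℝ³` at `0`. -/
def tangentConeAtZero (S : Set (ℝ × ℝ × ℝ)) : Set (ℝ × ℝ × ℝ) :=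
  {v | ∃ (x : ℕ → ℝ × ℝ × ℝ) (l : ℕ → ℝ),
    (∀ k, x k ∈ S) ∧ Tendsto x atTop (𝓝 0) ∧ (∀ k, 0 < l k) ∧
    Tendsto (fun k => l k • x k) atTop (𝓝 v)}

lemma fbound {r z M : ℝ} (hM : 0 < M) (hz : |z| ≤ r) (hr : r ≤ Real.exp (-M)) :
    M * |z| ≤ |r * Real.log r| := by
  have hr0 : 0 ≤ r := le_trans (abs_nonneg z) hz
  rcases eq_or_lt_of_le hr0 with h0 | h0
  · have : z = 0 := abs_nonpos_iff.mp (by rw [← h0] at hz; exact hz)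
    simp [this]; positivity
  · have hlog : Real.log r ≤ -M := by
      calc Real.log r ≤ Real.log (Real.exp (-M)) := Real.log_le_log h0 hr
        _ = -M := Real.log_exp _
    have habs : M ≤ |Real.log r| := le_trans (by linarith [neg_le_abs (Real.log r)]) le_rfl
    rw [abs_mul, abs_of_pos h0]
    nlinarith [abs_nonneg z, abs_nonneg (Real.log r)]

lemma small_of_bounds {v c : ℝ} (hc : ∀ M : ℝ, 0 < M → M * |v| ≤ c) : v = 0 := by
  by_contra h
  have hv : 0 < |v| := abs_pos.mpr h
  have hc0 : 0 ≤ c := le_trans (by positivity) (hc 1 one_pos)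
  have h1 := hc ((c + 1) / |v|) (by positivity)
  rw [div_mul_eq_mul_div, mul_div_assoc, div_self (ne_of_gt hv), mul_one] at h1
  linarith

lemma coord_zero {a b : ℕ → ℝ} {va vb : ℝ}
    (h : ∀ M : ℝ, 0 < M → ∀ᶠ k in atTop, M * |a k| ≤ b k)
    (ha : Tendsto a atTop (𝓝 va)) (hb : Tendsto b atTop (𝓝 vb)) : va = 0 := by
  apply small_of_bounds (c := vb)
  intro M hM
  exact le_of_tendsto_of_tendsto (Tendsto.const_mul M ha.abs) hb (h M hM)


set_option maxHeartbeats 1600000 in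
/-- for f(x,y) = |r log r| with r = √(x²+y²), the tangent cone at 0 of
the graph Y of f is the ray {(0,0,t) : t ≥ 0}, while the tangent cone of the plane
X = ℝ²×{0} is X itself. (Here log 0 = 0 in Lean, so f(0,0) = 0.) -/
theorem stmt_16 :
    let f : ℝ → ℝ → ℝ := fun x y =>
      |Real.sqrt (x ^ 2 + y ^ 2) * Real.log (Real.sqrt (x ^ 2 + y ^ 2))|
    let Y : Set (ℝ × ℝ × ℝ) := {p | p.2.2 = f p.1 p.2.1}
    let X : Set (ℝ × ℝ × ℝ) := {p | p.2.2 = 0}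
    tangentConeAtZero Y = {p : ℝ × ℝ × ℝ | p.1 = 0 ∧ p.2.1 = 0 ∧ 0 ≤ p.2.2} ∧
    tangentConeAtZero X = X := by
  intro f Y X
  constructor
  · ext v
    simp only [tangentConeAtZero, mem_setOf_eq]
    constructor
    · rintro ⟨x, l, hmem, hx0, hl, hlim⟩
      -- component limits
      have hlim1 : Tendsto (fun k => l k * (x k).1) atTop (𝓝 v.1) := by
        have := (continuous_fst.tendsto v).comp hlim
        simpa [Function.comp_def] using this
      have hlim2 : Tendsto (fun k => l k * (x k).2.1) atTop (𝓝 v.2.1) := by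
        have := ((continuous_fst.comp continuous_snd).tendsto v).comp hlim
        simpa [Function.comp_def] using this
      have hlim3 : Tendsto (fun k => l k * (x k).2.2) atTop (𝓝 v.2.2) := by
        have := ((continuous_snd.comp continuous_snd).tendsto v).comp hlim
        simpa [Function.comp_def] using this
      -- r tends to 0
      set r : ℕ → ℝ := fun k => Real.sqrt ((x k).1 ^ 2 + (x k).2.1 ^ 2) with hr_def
      have hx1 : Tendsto (fun k => (x k).1) atTop (𝓝 (0:ℝ)) := by
        have := (continuous_fst.tendsto (0 : ℝ × ℝ × ℝ)).comp hx0; simpa [Function.comp_def] using this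
      have hx2 : Tendsto (fun k => (x k).2.1) atTop (𝓝 (0:ℝ)) := by
        have := ((continuous_fst.comp continuous_snd).tendsto (0 : ℝ × ℝ × ℝ)).comp hx0
        simpa [Function.comp_def] using this
      have hr0 : Tendsto r atTop (𝓝 0) := by
        have : Tendsto (fun k => (x k).1 ^ 2 + (x k).2.1 ^ 2) atTop (𝓝 0) := by
          have := (hx1.pow 2).add (hx2.pow 2); simpa using this
        have := (Real.continuous_sqrt.tendsto 0).comp this
        simpa [Function.comp_def] using this
      -- the eventual bound machinery
      have hbound : ∀ (a : ℕ → ℝ), (∀ k, |a k| ≤ r k) → ∀ M : ℝ, 0 < M →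
          ∀ᶠ k in atTop, M * |l k * a k| ≤ l k * (x k).2.2 := by
        intro a ha M hM
        have hev : ∀ᶠ k in atTop, r k ≤ Real.exp (-M) := by
          have : ∀ᶠ y in 𝓝 (0:ℝ), y < Real.exp (-M) :=
            eventually_lt_nhds (by positivity)
          exact (hr0.eventually this).mono fun k hk => le_of_lt hk
        refine hev.mono fun k hk => ?_
        have hb := fbound hM (ha k) hk
        have hfk : (x k).2.2 = |r k * Real.log (r k)| := hmem k
        rw [hfk, abs_mul, abs_of_pos (hl k)]
        calc M * (l k * |a k|) = l k * (M * |a k|) := by ring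
          _ ≤ l k * |r k * Real.log (r k)| :=
            mul_le_mul_of_nonneg_left hb (le_of_lt (hl k))
      have habs1 : ∀ k, |(x k).1| ≤ r k := by
        intro k
        rw [hr_def, ← Real.sqrt_sq_eq_abs]
        exact Real.sqrt_le_sqrt (by nlinarith [sq_nonneg ((x k).2.1)])
      have habs2 : ∀ k, |(x k).2.1| ≤ r k := by
        intro k
        rw [hr_def, ← Real.sqrt_sq_eq_abs]
        exact Real.sqrt_le_sqrt (by nlinarith [sq_nonneg ((x k).1)])
      refine ⟨coord_zero (hbound _ habs1) hlim1 hlim3,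
              coord_zero (hbound _ habs2) hlim2 hlim3, ?_⟩
      refine ge_of_tendsto hlim3 (Eventually.of_forall fun k => ?_)
      have : (0:ℝ) ≤ (x k).2.2 := by rw [hmem k]; exact abs_nonneg _
      exact mul_nonneg (le_of_lt (hl k)) this
    · rintro ⟨h1, h2, h3⟩
      rcases eq_or_lt_of_le h3 with h0 | h0
      · -- v = 0
        have hv : v = 0 := Prod.ext h1 (Prod.ext h2 h0.symm)
        refine ⟨fun _ => 0, fun _ => 1, fun k => ?_, tendsto_const_nhds, fun _ => one_pos, ?_⟩
        · show (0:ℝ) = f 0 0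
          simp [f]
        · simpa [hv] using (tendsto_const_nhds : Tendsto (fun _ : ℕ => (0 : ℝ × ℝ × ℝ)) atTop (𝓝 0))
      · set t := v.2.2
        refine ⟨fun k => (Real.exp (-((k:ℝ)+1)), 0, ((k:ℝ)+1) * Real.exp (-((k:ℝ)+1))),
                fun k => t * Real.exp ((k:ℝ)+1) / ((k:ℝ)+1), ?_, ?_, ?_, ?_⟩
        · intro k
          show ((k:ℝ)+1) * Real.exp (-((k:ℝ)+1)) = f (Real.exp (-((k:ℝ)+1))) 0
          have he : (0:ℝ) < Real.exp (-((k:ℝ)+1)) := Real.exp_pos _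
          simp only [f]
          rw [show Real.exp (-((k:ℝ)+1)) ^ 2 + (0:ℝ) ^ 2 = Real.exp (-((k:ℝ)+1)) ^ 2 by ring,
              Real.sqrt_sq (le_of_lt he), Real.log_exp, abs_mul, abs_of_pos he,
              abs_neg, abs_of_pos (by positivity : (0:ℝ) < (k:ℝ)+1)]
          ring
        · have hk : Tendsto (fun k : ℕ => (k:ℝ)+1) atTop atTop :=
            tendsto_natCast_atTop_atTop.atTop_add tendsto_const_nhds
          have he : Tendsto (fun k : ℕ => Real.exp (-((k:ℝ)+1))) atTop (𝓝 0) :=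
            Real.tendsto_exp_atBot.comp (tendsto_neg_atTop_atBot.comp hk)
          have hxe : Tendsto (fun k : ℕ => ((k:ℝ)+1) * Real.exp (-((k:ℝ)+1))) atTop (𝓝 0) := by
            have h := (Real.tendsto_pow_mul_exp_neg_atTop_nhds_zero 1).comp hk
            simp only [Function.comp_def, pow_one] at h
            exact h
          have : Tendsto (fun k : ℕ => ((Real.exp (-((k:ℝ)+1)), 0,
              ((k:ℝ)+1) * Real.exp (-((k:ℝ)+1))) : ℝ × ℝ × ℝ)) atTop (𝓝 (0, 0, 0)) :=
            he.prodMk_nhds ((tendsto_const_nhds).prodMk_nhds hxe)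
          simpa [Prod.mk.injEq, Prod.mk_zero_zero] using this
        · intro k
          have : (0:ℝ) < (k:ℝ)+1 := by positivity
          positivity
        · have heq : ∀ k : ℕ, (t * Real.exp ((k:ℝ)+1) / ((k:ℝ)+1)) •
              ((Real.exp (-((k:ℝ)+1)), 0, ((k:ℝ)+1) * Real.exp (-((k:ℝ)+1))) : ℝ × ℝ × ℝ)
              = (t / ((k:ℝ)+1), 0, t) := by
            intro k
            have hk0 : ((k:ℝ)+1) ≠ 0 := by positivity
            have hee : Real.exp ((k:ℝ)+1) * Real.exp (-((k:ℝ)+1)) = 1 := by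
              rw [← Real.exp_add, show ((k:ℝ)+1) + -((k:ℝ)+1) = (0:ℝ) by ring, Real.exp_zero]
            simp only [Prod.smul_mk, smul_eq_mul, Prod.mk.injEq]
            refine ⟨?_, by ring, ?_⟩
            · rw [div_mul_eq_mul_div, mul_assoc, hee, mul_one]
            · rw [div_mul_eq_mul_div]
              rw [show t * Real.exp ((k:ℝ)+1) * (((k:ℝ)+1) * Real.exp (-((k:ℝ)+1)))
                  = t * (Real.exp ((k:ℝ)+1) * Real.exp (-((k:ℝ)+1))) * ((k:ℝ)+1) by ring,
                hee, mul_one, mul_div_assoc, div_self hk0, mul_one]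
          have hdiv : Tendsto (fun k : ℕ => t / ((k:ℝ)+1)) atTop (𝓝 0) := by
            apply Tendsto.div_atTop tendsto_const_nhds
            exact tendsto_natCast_atTop_atTop.atTop_add tendsto_const_nhds
          have : Tendsto (fun k : ℕ => ((t / ((k:ℝ)+1), 0, t) : ℝ × ℝ × ℝ)) atTop
              (𝓝 (0, 0, t)) := hdiv.prodMk_nhds (tendsto_const_nhds.prodMk_nhds tendsto_const_nhds)
          have hveq : v = ((0:ℝ), (0:ℝ), t) := Prod.ext h1 (Prod.ext h2 rfl)
          rw [hveq]
          exact Tendsto.congr (fun k => (heq k).symm) this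
  · ext v
    simp only [tangentConeAtZero, mem_setOf_eq]
    constructor
    · rintro ⟨x, l, hmem, hx0, hl, hlim⟩
      have hlim3 : Tendsto (fun k => l k * (x k).2.2) atTop (𝓝 v.2.2) := by
        have := ((continuous_snd.comp continuous_snd).tendsto v).comp hlim
        simpa [Function.comp_def] using this
      have : Tendsto (fun _ : ℕ => (0:ℝ)) atTop (𝓝 v.2.2) := by
        have heq : (fun k => l k * (x k).2.2) = fun _ => (0:ℝ) := by
          funext k; rw [hmem k, mul_zero]
        rwa [heq] at hlim3
      show v.2.2 = 0
      exact tendsto_nhds_unique this tendsto_const_nhds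
    · intro hv
      refine ⟨fun k => (1 / ((k:ℝ)+1)) • v, fun k => (k:ℝ)+1, ?_, ?_, ?_, ?_⟩
      · intro k
        show ((1 / ((k:ℝ)+1)) • v).2.2 = 0
        have hv' : v.2.2 = 0 := hv
        simp [Prod.smul_def, hv']
      · have hdiv : Tendsto (fun k : ℕ => 1 / ((k:ℝ)+1)) atTop (𝓝 0) := by
          apply Tendsto.div_atTop tendsto_const_nhds
          exact tendsto_natCast_atTop_atTop.atTop_add tendsto_const_nhds
        simpa using hdiv.smul_const v
      · intro k; positivity
      · have heq : ∀ k : ℕ, ((k:ℝ)+1) • ((1 / ((k:ℝ)+1)) • v) = v := by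
          intro k
          rw [smul_smul, mul_one_div, div_self (by positivity : ((k:ℝ)+1) ≠ 0), one_smul]
        simp only [heq]
        exact tendsto_const_nhds
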